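/- arXiv:2601.01351 — 5 statements merged into one kernel-verified Lean document; each statement's English description precedes it below -/
import Mathlib

section
/- Let A be a real symmetric positive semidefinite p×p matrix. Then ‖δ(A)‖ = ‖ZᵀAy‖ ≤ λ_max(ZᵀAZ)^{1/2} · (yᵀAy)^{1/2}. Consequently, if in addition λ_min(ZᵀAZ) > λ_min(WᵀAW), then ‖β̂(A)‖ ≤ UB(A) := λ_max(ZᵀAZ)^{1/2}·(yᵀAy)^{1/2}/(λ_min(ZᵀAZ) − λ_min(WᵀAW)). -/
open Matrix

/-- The spectral norm (operator 2-norm) of a real matrix. -/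
noncomputable def spec {m n : ℕ} (M : Matrix (Fin m) (Fin n) ℝ) : ℝ :=
  ‖LinearMap.toContinuousLinearMap (Matrix.toEuclideanLin M)‖

/-- The smallest (real) eigenvalue of a square real matrix: `sInf` of its real spectrum.
For a symmetric matrix this is the smallest eigenvalue. -/
noncomputable def lmin {n : ℕ} (M : Matrix (Fin n) (Fin n) ℝ) : ℝ :=
  sInf (spectrum ℝ M)

/-- The largest (real) eigenvalue of a square real matrix: `sSup` of its real spectrum. -/
noncomputable def lmax {n : ℕ} (M : Matrix (Fin n) (Fin n) ℝ) : ℝ :=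
  sSup (spectrum ℝ M)

/-- The Euclidean norm of a vector in `ℝ^n`. -/
noncomputable def vnorm {n : ℕ} (v : Fin n → ℝ) : ℝ :=
  Real.sqrt (∑ i, (v i) ^ 2)

/-- `W = (Z, y)`: the `p × (m+1)` matrix obtained by appending `y` as a last column to `Z`. -/
def appendCol {p m : ℕ} (Z : Matrix (Fin p) (Fin m) ℝ) (y : Fin p → ℝ) :
    Matrix (Fin p) (Fin (m + 1)) ℝ :=
  Matrix.of fun i j => Fin.lastCases (y i) (fun k => Z i k) j

/-- `γ(A) = ZᵀAZ − λ_min(WᵀAW)·I_m`. -/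
noncomputable def gam {p m : ℕ} (Z : Matrix (Fin p) (Fin m) ℝ) (y : Fin p → ℝ)
    (A : Matrix (Fin p) (Fin p) ℝ) : Matrix (Fin m) (Fin m) ℝ :=
  Zᵀ * A * Z - lmin ((appendCol Z y)ᵀ * A * appendCol Z y) • (1 : Matrix (Fin m) (Fin m) ℝ)

/-- `δ(A) = ZᵀAy`. -/
noncomputable def del {p m : ℕ} (Z : Matrix (Fin p) (Fin m) ℝ) (y : Fin p → ℝ)
    (A : Matrix (Fin p) (Fin p) ℝ) : Fin m → ℝ :=
  (Zᵀ * A) *ᵥ y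

/-- The weighted total least squares estimator `β̂(A) = γ(A)⁻¹ δ(A)`. -/
noncomputable def betahat {p m : ℕ} (Z : Matrix (Fin p) (Fin m) ℝ) (y : Fin p → ℝ)
    (A : Matrix (Fin p) (Fin p) ℝ) : Fin m → ℝ :=
  (gam Z y A)⁻¹ *ᵥ del Z y A

/-! Cauchy–Schwarz for the semi-inner product `(u, v) ↦ uᵀ A v` gives
`‖δ‖⁴ = ((Z δ)ᵀ A y)² ≤ (δᵀ ZᵀAZ δ) (yᵀ A y) ≤ λ_max(ZᵀAZ) ‖δ‖² (yᵀ A y)`.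
Since `λ_min(M) • 1 ≤ M` for symmetric `M`, the quadratic form of `γ(A)` is bounded below by
`c ‖v‖²` with `c = λ_min(ZᵀAZ) − λ_min(WᵀAW) > 0`; hence `γ(A)` is invertible and
`c ‖β̂‖² ≤ β̂ᵀ γ(A) β̂ = β̂ᵀ δ ≤ ‖β̂‖ ‖δ‖`. -/

namespace Matrix

theorem PosSemidef.dotProduct_mulVec_sq_le {n : Type*} [Fintype n] {A : Matrix n n ℝ}
    (hA : A.PosSemidef) (x y : n → ℝ) :
    (x ⬝ᵥ A *ᵥ y) ^ 2 ≤ (x ⬝ᵥ A *ᵥ x) * (y ⬝ᵥ A *ᵥ y) := by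
  have hsymm : y ⬝ᵥ A *ᵥ x = x ⬝ᵥ A *ᵥ y := by
    rw [dotProduct_mulVec, ← mulVec_transpose, dotProduct_comm,
      ← conjTranspose_eq_transpose_of_trivial, hA.isHermitian.eq]
  have hquad : ∀ t : ℝ,
      0 ≤ (y ⬝ᵥ A *ᵥ y) * (t * t) + 2 * (x ⬝ᵥ A *ᵥ y) * t + x ⬝ᵥ A *ᵥ x := by
    intro t
    have := hA.dotProduct_mulVec_nonneg (x + t • y)
    simp only [star_trivial, mulVec_add, mulVec_smul, add_dotProduct, dotProduct_add,
      smul_dotProduct, dotProduct_smul, smul_eq_mul, hsymm] at this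
    linarith
  have := discrim_le_zero hquad
  rw [discrim] at this
  linarith

theorem PosSemidef.transpose_mul_mul_same {m n : Type*} [Fintype m] [Fintype n]
    {A : Matrix m m ℝ} (hA : A.PosSemidef) (B : Matrix m n ℝ) : (Bᵀ * A * B).PosSemidef := by
  simpa only [conjTranspose_eq_transpose_of_trivial] using hA.conjTranspose_mul_mul_same B

end Matrix

theorem vnorm_nonneg {n : ℕ} (v : Fin n → ℝ) : 0 ≤ vnorm v := Real.sqrt_nonneg _

theorem vnorm_sq {n : ℕ} (v : Fin n → ℝ) : vnorm v ^ 2 = v ⬝ᵥ v := by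
  rw [vnorm, Real.sq_sqrt (by positivity)]
  simp only [dotProduct, sq]

theorem dotProduct_le_vnorm_mul_vnorm {n : ℕ} (v u : Fin n → ℝ) :
    v ⬝ᵥ u ≤ vnorm v * vnorm u := by
  have h := PosSemidef.one.dotProduct_mulVec_sq_le v u
  simp only [one_mulVec, ← vnorm_sq, ← mul_pow] at h
  exact (le_abs_self _).trans
    (abs_le_of_sq_le_sq h (mul_nonneg (vnorm_nonneg v) (vnorm_nonneg u)))

section Rayleigh

variable {n : ℕ} {M : Matrix (Fin n) (Fin n) ℝ}

theorem posSemidef_sub_lmin_smul_one (hM : M.IsHermitian) : (M - lmin M • 1).PosSemidef := by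
  rw [posSemidef_iff_isHermitian_and_spectrum_nonneg]
  refine ⟨hM.sub (isHermitian_one.smul (IsSelfAdjoint.all _)), ?_⟩
  rw [← Algebra.algebraMap_eq_smul_one, ← spectrum.sub_singleton_eq]
  rintro _ ⟨a, ha, _, rfl, rfl⟩
  exact sub_nonneg.2 (csInf_le M.finite_real_spectrum.bddBelow ha)

theorem posSemidef_lmax_smul_one_sub (hM : M.IsHermitian) : (lmax M • 1 - M).PosSemidef := by
  rw [posSemidef_iff_isHermitian_and_spectrum_nonneg]
  refine ⟨(isHermitian_one.smul (IsSelfAdjoint.all _)).sub hM, ?_⟩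
  rw [← Algebra.algebraMap_eq_smul_one, ← spectrum.singleton_sub_eq]
  rintro _ ⟨_, rfl, a, ha, rfl⟩
  exact sub_nonneg.2 (le_csSup M.finite_real_spectrum.bddAbove ha)

theorem lmin_mul_dotProduct_self_le (hM : M.IsHermitian) (v : Fin n → ℝ) :
    lmin M * (v ⬝ᵥ v) ≤ v ⬝ᵥ M *ᵥ v := by
  have := (posSemidef_sub_lmin_smul_one hM).dotProduct_mulVec_nonneg v
  simp only [star_trivial, sub_mulVec, smul_mulVec, one_mulVec, dotProduct_sub, dotProduct_smul,
    smul_eq_mul] at this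
  linarith

theorem dotProduct_mulVec_le_lmax_mul (hM : M.IsHermitian) (v : Fin n → ℝ) :
    v ⬝ᵥ M *ᵥ v ≤ lmax M * (v ⬝ᵥ v) := by
  have := (posSemidef_lmax_smul_one_sub hM).dotProduct_mulVec_nonneg v
  simp only [star_trivial, sub_mulVec, smul_mulVec, one_mulVec, dotProduct_sub, dotProduct_smul,
    smul_eq_mul] at this
  linarith

end Rayleigh

theorem mul_vnorm_inv_mulVec_le {n : ℕ} {G : Matrix (Fin n) (Fin n) ℝ} {c : ℝ} (hc : 0 < c)
    (hG : ∀ v, c * (v ⬝ᵥ v) ≤ v ⬝ᵥ G *ᵥ v) (d : Fin n → ℝ) :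
    c * vnorm (G⁻¹ *ᵥ d) ≤ vnorm d := by
  have hdet : IsUnit G.det := by
    rw [isUnit_iff_ne_zero, Ne, ← exists_mulVec_eq_zero_iff]
    rintro ⟨v, hv, hGv⟩
    have hpos : 0 < v ⬝ᵥ v := by simpa using dotProduct_self_star_pos_iff.2 hv
    have := hG v
    rw [hGv, dotProduct_zero] at this
    exact this.not_gt (mul_pos hc hpos)
  set x := G⁻¹ *ᵥ d
  have hGx : G *ᵥ x = d := by rw [mulVec_mulVec, mul_nonsing_inv _ hdet, one_mulVec]
  have hx : c * vnorm x ^ 2 ≤ vnorm x * vnorm d :=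
    calc c * vnorm x ^ 2 = c * (x ⬝ᵥ x) := by rw [vnorm_sq]
      _ ≤ x ⬝ᵥ G *ᵥ x := hG x
      _ = x ⬝ᵥ d := by rw [hGx]
      _ ≤ vnorm x * vnorm d := dotProduct_le_vnorm_mul_vnorm x d
  rcases (vnorm_nonneg x).eq_or_lt with h0 | h0
  · rw [← h0, mul_zero]
    exact vnorm_nonneg d
  · exact le_of_mul_le_mul_right (by nlinarith) h0

theorem vnorm_del_le {p m : ℕ} (Z : Matrix (Fin p) (Fin m) ℝ) (y : Fin p → ℝ)
    {A : Matrix (Fin p) (Fin p) ℝ} (hA : A.PosSemidef) :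
    vnorm (del Z y A) ≤ √(lmax (Zᵀ * A * Z)) * √(y ⬝ᵥ A *ᵥ y) := by
  set δ := del Z y A
  set L := lmax (Zᵀ * A * Z)
  have hq : 0 ≤ y ⬝ᵥ A *ᵥ y := by simpa using hA.dotProduct_mulVec_nonneg y
  have key : (vnorm δ ^ 2) ^ 2 ≤ (L * (y ⬝ᵥ A *ᵥ y)) * vnorm δ ^ 2 :=
    calc (vnorm δ ^ 2) ^ 2 = ((Z *ᵥ δ) ⬝ᵥ A *ᵥ y) ^ 2 := by
          rw [vnorm_sq, dotProduct_comm (Z *ᵥ δ), ← dotProduct_transpose_mulVec, mulVec_mulVec]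
          rfl
      _ ≤ ((Z *ᵥ δ) ⬝ᵥ A *ᵥ (Z *ᵥ δ)) * (y ⬝ᵥ A *ᵥ y) := hA.dotProduct_mulVec_sq_le _ _
      _ = (δ ⬝ᵥ (Zᵀ * A * Z) *ᵥ δ) * (y ⬝ᵥ A *ᵥ y) := by
          rw [← mulVec_mulVec, ← mulVec_mulVec, dotProduct_transpose_mulVec, dotProduct_comm]
      _ ≤ (L * (δ ⬝ᵥ δ)) * (y ⬝ᵥ A *ᵥ y) :=
          mul_le_mul_of_nonneg_right
            (dotProduct_mulVec_le_lmax_mul (hA.transpose_mul_mul_same Z).isHermitian δ) hq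
      _ = (L * (y ⬝ᵥ A *ᵥ y)) * vnorm δ ^ 2 := by rw [vnorm_sq]; ring
  rw [← Real.sqrt_mul' _ hq]
  rcases (vnorm_nonneg δ).eq_or_lt with h0 | h0
  · rw [← h0]
    positivity
  · exact (Real.le_sqrt' h0).2 (le_of_mul_le_mul_right (by nlinarith) (pow_pos h0 2))

theorem dotProduct_self_mul_le_dotProduct_gam_mulVec {p m : ℕ} (Z : Matrix (Fin p) (Fin m) ℝ)
    (y : Fin p → ℝ) {A : Matrix (Fin p) (Fin p) ℝ} (hA : A.PosSemidef) (v : Fin m → ℝ) :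
    (lmin (Zᵀ * A * Z) - lmin ((appendCol Z y)ᵀ * A * appendCol Z y)) * (v ⬝ᵥ v) ≤
      v ⬝ᵥ gam Z y A *ᵥ v := by
  have := lmin_mul_dotProduct_self_le (hA.transpose_mul_mul_same Z).isHermitian v
  rw [gam, sub_mulVec, smul_mulVec, one_mulVec, dotProduct_sub, dotProduct_smul, smul_eq_mul]
  linarith

theorem stmt2_general {p m : ℕ}
    (Z : Matrix (Fin p) (Fin m) ℝ) (y : Fin p → ℝ)
    (A : Matrix (Fin p) (Fin p) ℝ) (hA : A.PosSemidef) :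
    vnorm (del Z y A) ≤ Real.sqrt (lmax (Zᵀ * A * Z)) * Real.sqrt (y ⬝ᵥ A *ᵥ y) ∧
      (lmin ((appendCol Z y)ᵀ * A * appendCol Z y) < lmin (Zᵀ * A * Z) →
        vnorm (betahat Z y A) ≤
          Real.sqrt (lmax (Zᵀ * A * Z)) * Real.sqrt (y ⬝ᵥ A *ᵥ y) /
            (lmin (Zᵀ * A * Z) - lmin ((appendCol Z y)ᵀ * A * appendCol Z y))) := by
  refine ⟨vnorm_del_le Z y hA, fun hgap => ?_⟩
  have hc := sub_pos.2 hgap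
  have hcoercive := dotProduct_self_mul_le_dotProduct_gam_mulVec Z y hA
  rw [le_div_iff₀ hc, mul_comm]
  exact (mul_vnorm_inv_mulVec_le hc hcoercive _).trans (vnorm_del_le Z y hA)

/-- For `A` symmetric positive semidefinite:
`‖δ(A)‖ = ‖ZᵀAy‖ ≤ λ_max(ZᵀAZ)^{1/2}·(yᵀAy)^{1/2}`; and if moreover
`λ_min(ZᵀAZ) > λ_min(WᵀAW)`, then `‖β̂(A)‖ ≤ UB(A)`. -/
theorem stmt2 {p m : ℕ} (hp : 0 < p) (hm : 0 < m)
    (Z : Matrix (Fin p) (Fin m) ℝ) (y : Fin p → ℝ)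
    (A : Matrix (Fin p) (Fin p) ℝ) (hA : A.PosSemidef) :
    vnorm (del Z y A) ≤ Real.sqrt (lmax (Zᵀ * A * Z)) * Real.sqrt (y ⬝ᵥ A *ᵥ y) ∧
      (lmin ((appendCol Z y)ᵀ * A * appendCol Z y) < lmin (Zᵀ * A * Z) →
        vnorm (betahat Z y A) ≤
          Real.sqrt (lmax (Zᵀ * A * Z)) * Real.sqrt (y ⬝ᵥ A *ᵥ y) /
            (lmin (Zᵀ * A * Z) - lmin ((appendCol Z y)ᵀ * A * appendCol Z y))) :=
  stmt2_general Z y A hA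
end

section
/- Let A be a real symmetric positive definite p×p matrix and B a real symmetric p×p matrix. Then ‖δ(B) − δ(A)‖ = ‖Zᵀ(B−A)y‖ ≤ λ_max(ZᵀAZ)^{1/2} · (yᵀAy)^{1/2} · ‖A^{-1}‖ · ‖B−A‖. -/
open Matrix

/-!
With `S = A^{1/2}` one has the factorisation `Zᵀ(B − A)y = (SZ)ᵀ · S⁻¹(B − A)S⁻¹ · (Sy)`, and
`‖SZ‖² = ‖ZᵀAZ‖`, `‖S⁻¹‖² = ‖A⁻¹‖`, `‖Sy‖² = yᵀAy`. For the positive semidefinite matrix `ZᵀAZ`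
the spectral norm is at most its largest eigenvalue, since the continuous functional calculus
of a self-adjoint matrix is isometric for the operator norm.
-/

open scoped Matrix.Norms.L2Operator MatrixOrder

lemma vnorm_eq_norm_toLp {n : ℕ} (v : Fin n → ℝ) : vnorm v = ‖WithLp.toLp 2 v‖ := by
  simp [vnorm, EuclideanSpace.norm_eq, sq_abs]

lemma vnorm_mulVec_le {a b : ℕ} (M : Matrix (Fin a) (Fin b) ℝ) (v : Fin b → ℝ) :
    vnorm (M *ᵥ v) ≤ ‖M‖ * vnorm v := by
  simpa [vnorm_eq_norm_toLp] using M.l2_opNorm_mulVec (WithLp.toLp 2 v)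

lemma vnorm_mulVec_eq_sqrt_dotProduct {a b : ℕ} (M : Matrix (Fin a) (Fin b) ℝ) (v : Fin b → ℝ) :
    vnorm (M *ᵥ v) = √(v ⬝ᵥ (Mᵀ * M) *ᵥ v) := by
  rw [vnorm, ← mulVec_mulVec, dotProduct_mulVec, vecMul_transpose]
  simp only [dotProduct, sq]

namespace Matrix

variable {m n : Type*} [Fintype m] [Fintype n] [DecidableEq n]

lemma l2_opNorm_mul_self_eq_norm_transpose_mul_self (M : Matrix m n ℝ) :
    ‖M‖ * ‖M‖ = ‖Mᵀ * M‖ := by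
  rw [← conjTranspose_eq_transpose_of_trivial, l2_opNorm_conjTranspose_mul_self]

lemma l2_opNorm_transpose [DecidableEq m] (M : Matrix m n ℝ) : ‖Mᵀ‖ = ‖M‖ := by
  rw [← conjTranspose_eq_transpose_of_trivial, l2_opNorm_conjTranspose]

lemma PosSemidef.l2_opNorm_le_sSup_spectrum {P : Matrix n n ℝ} (hP : P.PosSemidef) :
    ‖P‖ ≤ sSup (spectrum ℝ P) := by
  have hbdd : BddAbove (spectrum ℝ P) := P.finite_spectrum.bddAbove
  have hnonneg : ∀ x ∈ spectrum ℝ P, 0 ≤ x := fun x hx => spectrum_nonneg_of_nonneg hP.nonneg hx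
  conv_lhs => rw [← cfc_id ℝ P hP.isHermitian.isSelfAdjoint]
  refine norm_cfc_le (Real.sSup_nonneg hnonneg) fun x hx => ?_
  rw [id, Real.norm_of_nonneg (hnonneg x hx)]
  exact le_csSup hbdd hx

end Matrix

lemma spec_eq_l2_opNorm {a b : ℕ} (M : Matrix (Fin a) (Fin b) ℝ) : spec M = ‖M‖ := rfl

lemma vnorm_transpose_mul_mulVec_le_of_sqrt {p m : ℕ} {A S : Matrix (Fin p) (Fin p) ℝ}
    (hSt : Sᵀ = S) (hSS : S * S = A) (hS : IsUnit S.det) (Z : Matrix (Fin p) (Fin m) ℝ)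
    (D : Matrix (Fin p) (Fin p) ℝ) (y : Fin p → ℝ) :
    vnorm ((Zᵀ * D) *ᵥ y) ≤ √‖Zᵀ * A * Z‖ * √(y ⬝ᵥ A *ᵥ y) * (‖A⁻¹‖ * ‖D‖) := by
  set T := S⁻¹
  have hTS : T * S = 1 := nonsing_inv_mul S hS
  have hST : S * T = 1 := mul_nonsing_inv S hS
  have hTt : Tᵀ = T := by rw [transpose_nonsing_inv, hSt]
  have factor : Zᵀ * D = (S * Z)ᵀ * (T * D * T) * S := by
    rw [transpose_mul, hSt]
    simp only [Matrix.mul_assoc]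
    rw [hTS, Matrix.mul_one, ← Matrix.mul_assoc S T, hST, Matrix.one_mul]
  have hSZ : ‖S * Z‖ = √‖Zᵀ * A * Z‖ := by
    rw [← Real.sqrt_mul_self (norm_nonneg _), l2_opNorm_mul_self_eq_norm_transpose_mul_self,
      transpose_mul, hSt, Matrix.mul_assoc, ← Matrix.mul_assoc S, hSS, ← Matrix.mul_assoc]
  have hT : ‖T‖ * ‖T‖ = ‖A⁻¹‖ := by
    rw [l2_opNorm_mul_self_eq_norm_transpose_mul_self, hTt, ← hSS, Matrix.mul_inv_rev]
  have hSy : vnorm (S *ᵥ y) = √(y ⬝ᵥ A *ᵥ y) := by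
    rw [vnorm_mulVec_eq_sqrt_dotProduct, hSt, hSS]
  calc vnorm ((Zᵀ * D) *ᵥ y) = vnorm (((S * Z)ᵀ * (T * D * T)) *ᵥ (S *ᵥ y)) := by
        rw [factor, mulVec_mulVec]
    _ ≤ ‖(S * Z)ᵀ * (T * D * T)‖ * vnorm (S *ᵥ y) := vnorm_mulVec_le _ _
    _ ≤ ‖(S * Z)ᵀ‖ * ‖T * D * T‖ * vnorm (S *ᵥ y) := by
        gcongr
        · exact Real.sqrt_nonneg _
        · exact l2_opNorm_mul _ _
    _ ≤ ‖S * Z‖ * (‖T‖ * ‖D‖ * ‖T‖) * vnorm (S *ᵥ y) := by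
        rw [l2_opNorm_transpose]
        gcongr
        · exact Real.sqrt_nonneg _
        · exact (l2_opNorm_mul _ _).trans (by gcongr; exact l2_opNorm_mul _ _)
    _ = √‖Zᵀ * A * Z‖ * √(y ⬝ᵥ A *ᵥ y) * (‖A⁻¹‖ * ‖D‖) := by
        rw [hSZ, hSy, ← hT]; ring

theorem stmt3_general {p m : ℕ}
    (Z : Matrix (Fin p) (Fin m) ℝ) (y : Fin p → ℝ)
    (A B : Matrix (Fin p) (Fin p) ℝ) (hA : A.PosDef) :
    vnorm (del Z y B - del Z y A) = vnorm ((Zᵀ * (B - A)) *ᵥ y) ∧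
      vnorm ((Zᵀ * (B - A)) *ᵥ y) ≤
        Real.sqrt (lmax (Zᵀ * A * Z)) * Real.sqrt (y ⬝ᵥ A *ᵥ y) *
          (spec A⁻¹ * spec (B - A)) := by
  refine ⟨by rw [del, del, ← sub_mulVec, ← Matrix.mul_sub], ?_⟩
  set S := CFC.sqrt A
  have hSt : Sᵀ = S := (isHermitian_iff_isSymm.mp (CFC.sqrt_nonneg A).posSemidef.isHermitian).eq
  have hSS : S * S = A := CFC.sqrt_mul_sqrt_self A hA.posSemidef.nonneg
  have hS : IsUnit S.det :=
    (isUnit_iff_isUnit_det S).mp (hA.isStrictlyPositive.isUnit_cfcSqrt A)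
  have hZAZ : (Zᵀ * A * Z).PosSemidef := by
    simpa only [conjTranspose_eq_transpose_of_trivial] using
      hA.posSemidef.conjTranspose_mul_mul_same Z
  calc vnorm ((Zᵀ * (B - A)) *ᵥ y)
      ≤ √‖Zᵀ * A * Z‖ * √(y ⬝ᵥ A *ᵥ y) * (‖A⁻¹‖ * ‖B - A‖) :=
        vnorm_transpose_mul_mulVec_le_of_sqrt hSt hSS hS Z (B - A) y
    _ ≤ √(lmax (Zᵀ * A * Z)) * √(y ⬝ᵥ A *ᵥ y) * (spec A⁻¹ * spec (B - A)) := by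
        rw [spec_eq_l2_opNorm, spec_eq_l2_opNorm]
        gcongr
        exact hZAZ.l2_opNorm_le_sSup_spectrum

/-- For `A` symmetric positive definite and `B` symmetric:
`‖δ(B) − δ(A)‖ = ‖Zᵀ(B−A)y‖ ≤ λ_max(ZᵀAZ)^{1/2}·(yᵀAy)^{1/2}·‖A⁻¹‖·‖B−A‖`. -/
theorem stmt3 {p m : ℕ} (hp : 0 < p) (hm : 0 < m)
    (Z : Matrix (Fin p) (Fin m) ℝ) (y : Fin p → ℝ)
    (A B : Matrix (Fin p) (Fin p) ℝ) (hA : A.PosDef) (hBsymm : B.IsSymm) :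
    vnorm (del Z y B - del Z y A) = vnorm ((Zᵀ * (B - A)) *ᵥ y) ∧
      vnorm ((Zᵀ * (B - A)) *ᵥ y) ≤
        Real.sqrt (lmax (Zᵀ * A * Z)) * Real.sqrt (y ⬝ᵥ A *ᵥ y) *
          (spec A⁻¹ * spec (B - A)) :=
  stmt3_general Z y A B hA
end

section
/- Let A be a real symmetric positive definite p×p matrix and B a real symmetric p×p matrix. Then ‖γ(B) − γ(A)‖ ≤ ‖Zᵀ(B−A)Z‖ + ‖Wᵀ(B−A)W‖ ≤ (λ_max(ZᵀAZ) + λ_max(WᵀAW)) · ‖A^{-1}‖ · ‖B−A‖. -/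
open Matrix

/-!
`γ(B) - γ(A) = Zᵀ(B - A)Z - (λ_min(WᵀBW) - λ_min(WᵀAW)) • 1`, and on self-adjoint elements
`λ_min` is 1-Lipschitz for the operator norm (Weyl: `b ≥ a - ‖a - b‖ • 1 ≥ (λ_min(a) - ‖a - b‖) • 1`),
which gives the first inequality. For the second, with `R = A^{1/2}` one has `XᵀX = (RX)ᵀ A⁻¹ (RX)`, so
`‖X‖² ≤ ‖A⁻¹‖ ‖XᵀAX‖ ≤ ‖A⁻¹‖ λ_max(XᵀAX)`, and `‖Xᵀ(B - A)X‖ ≤ ‖X‖² ‖B - A‖`.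
-/
open scoped Matrix.Norms.L2Operator MatrixOrder ComplexOrder

lemma spec_eq_norm {m n : ℕ} (M : Matrix (Fin m) (Fin n) ℝ) : spec M = ‖M‖ := rfl

section Spectrum

-- Only complex matrices are a `CStarAlgebra` in Mathlib; real ones just have an isometric CFC.
variable {A : Type*} [NormedRing A] [StarRing A] [NormedAlgebra ℝ A]
  [IsometricContinuousFunctionalCalculus ℝ A IsSelfAdjoint] [PartialOrder A] [StarOrderedRing A]
  [NonnegSpectrumClass ℝ A]

lemma algebraMap_sInf_spectrum_le {a : A} (ha : IsSelfAdjoint a) :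
    algebraMap ℝ A (sInf (spectrum ℝ a)) ≤ a :=
  (algebraMap_le_iff_le_spectrum ha).2 fun _ hx =>
    csInf_le (ContinuousFunctionalCalculus.isCompact_spectrum a).bddBelow hx

lemma IsSelfAdjoint.algebraMap_neg_norm_le {a : A} (ha : IsSelfAdjoint a) :
    algebraMap ℝ A (-‖a‖) ≤ a :=
  (algebraMap_le_iff_le_spectrum ha).2 fun _ hx =>
    neg_le_of_abs_le (IsometricContinuousFunctionalCalculus.norm_spectrum_le a hx ha)

lemma sInf_spectrum_sub_sInf_spectrum_le [Nontrivial A] {a b : A} (ha : IsSelfAdjoint a)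
    (hb : IsSelfAdjoint b) : sInf (spectrum ℝ a) - sInf (spectrum ℝ b) ≤ ‖a - b‖ := by
  have hlower : algebraMap ℝ A (sInf (spectrum ℝ a) - ‖b - a‖) ≤ b := by
    simpa [sub_eq_add_neg] using
      add_le_add (algebraMap_sInf_spectrum_le ha) (hb.sub ha).algebraMap_neg_norm_le
  have hinf := le_csInf (ContinuousFunctionalCalculus.spectrum_nonempty b hb)
    ((algebraMap_le_iff_le_spectrum hb).1 hlower)
  rw [norm_sub_rev] at hinf
  linarith

lemma abs_sInf_spectrum_sub_sInf_spectrum_le [Nontrivial A] {a b : A} (ha : IsSelfAdjoint a)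
    (hb : IsSelfAdjoint b) : |sInf (spectrum ℝ a) - sInf (spectrum ℝ b)| ≤ ‖a - b‖ :=
  abs_sub_le_iff.2 ⟨sInf_spectrum_sub_sInf_spectrum_le ha hb,
    norm_sub_rev a b ▸ sInf_spectrum_sub_sInf_spectrum_le hb ha⟩

lemma norm_le_sSup_spectrum {a : A} (ha : 0 ≤ a) : ‖a‖ ≤ sSup (spectrum ℝ a) := by
  have hspec : ∀ x ∈ spectrum ℝ a, 0 ≤ x := fun x hx => spectrum_nonneg_of_nonneg ha hx
  have hcfc := norm_cfc_le (f := id) (Real.sSup_nonneg hspec) fun x hx => by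
    rw [id_eq, Real.norm_of_nonneg (hspec x hx)]
    exact le_csSup (ContinuousFunctionalCalculus.isCompact_spectrum a).bddAbove hx
  rwa [cfc_id ℝ a (IsSelfAdjoint.of_nonneg ha)] at hcfc

end Spectrum

namespace Matrix

variable {𝕜 : Type*} [RCLike 𝕜] {m n : Type*} [Fintype m] [Fintype n] [DecidableEq n]

lemma l2_opNorm_smul_one_le (c : 𝕜) : ‖c • (1 : Matrix n n 𝕜)‖ ≤ ‖c‖ := by
  rw [← diagonal_one, ← diagonal_smul, l2_opNorm_diagonal]
  simpa [Pi.smul_def] using pi_norm_const_le (ι := n) c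

variable [DecidableEq m]

lemma l2_opNorm_conjTranspose_mul_mul_le (X : Matrix m n 𝕜) (M : Matrix m m 𝕜) :
    ‖Xᴴ * M * X‖ ≤ ‖X‖ ^ 2 * ‖M‖ :=
  calc ‖Xᴴ * M * X‖ ≤ ‖Xᴴ‖ * ‖M‖ * ‖X‖ :=
        (l2_opNorm_mul _ _).trans (mul_le_mul_of_nonneg_right (l2_opNorm_mul _ _) (norm_nonneg _))
    _ = ‖X‖ ^ 2 * ‖M‖ := by rw [l2_opNorm_conjTranspose]; ring

lemma PosDef.sqrt_mul_inv_mul_sqrt {A : Matrix m m 𝕜} (hA : A.PosDef) :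
    CFC.sqrt A * A⁻¹ * CFC.sqrt A = 1 := by
  have hR : IsUnit (CFC.sqrt A).det :=
    (isUnit_iff_isUnit_det _).1 ((CFC.isUnit_sqrt_iff A hA.posSemidef.nonneg).2 hA.isUnit)
  nth_rw 2 [← CFC.sqrt_mul_sqrt_self A hA.posSemidef.nonneg]
  rw [mul_inv_rev, ← mul_assoc, mul_nonsing_inv _ hR, one_mul, nonsing_inv_mul _ hR]

lemma PosDef.l2_opNorm_sq_le {A : Matrix m m 𝕜} (hA : A.PosDef) (X : Matrix m n 𝕜) :
    ‖X‖ ^ 2 ≤ ‖A⁻¹‖ * ‖Xᴴ * A * X‖ := by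
  set R := CFC.sqrt A
  have hRH : Rᴴ = R := (CFC.sqrt_nonneg A).posSemidef.isHermitian
  have hRR : R * R = A := CFC.sqrt_mul_sqrt_self A hA.posSemidef.nonneg
  calc ‖X‖ ^ 2 = ‖Xᴴ * X‖ := by rw [sq, l2_opNorm_conjTranspose_mul_self]
    _ = ‖(R * X)ᴴ * A⁻¹ * (R * X)‖ := by
      rw [conjTranspose_mul, hRH]
      simp only [← Matrix.mul_assoc]
      rw [Matrix.mul_assoc Xᴴ, Matrix.mul_assoc Xᴴ, hA.sqrt_mul_inv_mul_sqrt, Matrix.mul_one]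
    _ ≤ ‖R * X‖ ^ 2 * ‖A⁻¹‖ := l2_opNorm_conjTranspose_mul_mul_le _ _
    _ = ‖A⁻¹‖ * ‖Xᴴ * A * X‖ := by
      rw [sq, ← l2_opNorm_conjTranspose_mul_self, conjTranspose_mul, hRH, ← Matrix.mul_assoc,
        Matrix.mul_assoc Xᴴ, hRR, mul_comm]

end Matrix

lemma norm_transpose_mul_mul_le_lmax {p q : ℕ} {A : Matrix (Fin p) (Fin p) ℝ} (hA : A.PosDef)
    (X : Matrix (Fin p) (Fin q) ℝ) (M : Matrix (Fin p) (Fin p) ℝ) :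
    ‖Xᵀ * M * X‖ ≤ lmax (Xᵀ * A * X) * (‖A⁻¹‖ * ‖M‖) := by
  have hXAX : (Xᵀ * A * X).PosSemidef := by
    simpa using hA.posSemidef.conjTranspose_mul_mul_same X
  calc ‖Xᵀ * M * X‖ ≤ ‖X‖ ^ 2 * ‖M‖ := by
        simpa using Matrix.l2_opNorm_conjTranspose_mul_mul_le X M
    _ ≤ ‖A⁻¹‖ * ‖Xᵀ * A * X‖ * ‖M‖ := by
        gcongr
        simpa using hA.l2_opNorm_sq_le X
    _ ≤ ‖A⁻¹‖ * lmax (Xᵀ * A * X) * ‖M‖ := by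
        gcongr
        exact norm_le_sSup_spectrum hXAX.nonneg
    _ = lmax (Xᵀ * A * X) * (‖A⁻¹‖ * ‖M‖) := by ring

lemma gam_sub_gam {p m : ℕ} (Z : Matrix (Fin p) (Fin m) ℝ) (y : Fin p → ℝ)
    (A B : Matrix (Fin p) (Fin p) ℝ) :
    gam Z y B - gam Z y A = Zᵀ * (B - A) * Z -
      (lmin ((appendCol Z y)ᵀ * B * appendCol Z y) -
        lmin ((appendCol Z y)ᵀ * A * appendCol Z y)) • (1 : Matrix (Fin m) (Fin m) ℝ) := by
  simp only [gam, Matrix.mul_sub, Matrix.sub_mul, sub_smul]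
  abel

theorem stmt4_general {p m : ℕ}
    (Z : Matrix (Fin p) (Fin m) ℝ) (y : Fin p → ℝ)
    (A B : Matrix (Fin p) (Fin p) ℝ) (hA : A.PosDef) (hBsymm : B.IsSymm) :
    spec (gam Z y B - gam Z y A) ≤
        spec (Zᵀ * (B - A) * Z) + spec ((appendCol Z y)ᵀ * (B - A) * appendCol Z y) ∧
      spec (Zᵀ * (B - A) * Z) + spec ((appendCol Z y)ᵀ * (B - A) * appendCol Z y) ≤
        (lmax (Zᵀ * A * Z) + lmax ((appendCol Z y)ᵀ * A * appendCol Z y)) *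
          (spec A⁻¹ * spec (B - A)) := by
  set W := appendCol Z y
  simp only [spec_eq_norm]
  refine ⟨?_, ?_⟩
  · have hselfAdjoint : ∀ {S : Matrix (Fin p) (Fin p) ℝ}, S.IsHermitian →
        IsSelfAdjoint (Wᵀ * S * W) := fun hS => by
      simpa using (Matrix.isHermitian_conjTranspose_mul_mul W hS).isSelfAdjoint
    have hlmin : |lmin (Wᵀ * B * W) - lmin (Wᵀ * A * W)| ≤ ‖Wᵀ * (B - A) * W‖ := by
      rw [Matrix.mul_sub, Matrix.sub_mul]
      exact abs_sInf_spectrum_sub_sInf_spectrum_le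
        (hselfAdjoint (Matrix.isHermitian_iff_isSymm.2 hBsymm)) (hselfAdjoint hA.isHermitian)
    rw [gam_sub_gam]
    refine (norm_sub_le _ _).trans ?_
    gcongr
    exact (Matrix.l2_opNorm_smul_one_le _).trans hlmin
  · rw [add_mul]
    exact add_le_add (norm_transpose_mul_mul_le_lmax hA Z _) (norm_transpose_mul_mul_le_lmax hA W _)

/-- For `A` symmetric positive definite and `B` symmetric:
`‖γ(B) − γ(A)‖ ≤ ‖Zᵀ(B−A)Z‖ + ‖Wᵀ(B−A)W‖
  ≤ (λ_max(ZᵀAZ) + λ_max(WᵀAW))·‖A⁻¹‖·‖B−A‖`. -/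
theorem stmt4 {p m : ℕ} (hp : 0 < p) (hm : 0 < m)
    (Z : Matrix (Fin p) (Fin m) ℝ) (y : Fin p → ℝ)
    (A B : Matrix (Fin p) (Fin p) ℝ) (hA : A.PosDef) (hBsymm : B.IsSymm) :
    spec (gam Z y B - gam Z y A) ≤
        spec (Zᵀ * (B - A) * Z) + spec ((appendCol Z y)ᵀ * (B - A) * appendCol Z y) ∧
      spec (Zᵀ * (B - A) * Z) + spec ((appendCol Z y)ᵀ * (B - A) * appendCol Z y) ≤
        (lmax (Zᵀ * A * Z) + lmax ((appendCol Z y)ᵀ * A * appendCol Z y)) *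
          (spec A⁻¹ * spec (B - A)) :=
  stmt4_general Z y A B hA hBsymm
end

section
/- (Asymptotic variance identity for the unprewhitened estimator.) Let m be a positive integer, β ∈ ℝ^m, β̄ = (I_m, β), β̄⊥ = (−βᵀ, 1), let Q₀ and Q₁ be m×m real symmetric matrices with Q₀ invertible, let τ₂ be a real number, set M = Q₀^{-1}(β̄β̄ᵀ)^{-1}β̄ and N_{m+1} = (I_{(m+1)²} + K_{m+1,m+1})/2. Then [β̄⊥ ⊗ M] · {2τ₂·N_{m+1} + 4·N_{m+1}·(I_{m+1} ⊗ (β̄ᵀQ₁β̄))·N_{m+1}} · [(β̄⊥)ᵀ ⊗ Mᵀ] = (1 + βᵀβ) · Q₀^{-1}{Q₁ + τ₂(I_m + ββᵀ)^{-1}}Q₀^{-1}. -/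
/-!
Write `E = I + K` with `K = K_{m+1,m+1}` and `M = Q₀⁻¹(β̄β̄ᵀ)⁻¹β̄`. Moving `K` across a Kronecker
product swaps its factors, so every term of the expansion that contains `K` contains one of the
factors `M(β̄⊥)ᵀ`, `β̄⊥β̄ᵀQ₁β̄` or `β̄ᵀQ₁β̄(β̄⊥)ᵀ`, all of which vanish because `β̄(β̄⊥)ᵀ = 0`. What
remains is `(β̄⊥(β̄⊥)ᵀ) ⊗ (τ₂MMᵀ + Mβ̄ᵀQ₁β̄Mᵀ)`, where `β̄⊥(β̄⊥)ᵀ = 1 + βᵀβ`, and `Mβ̄ᵀ = Q₀⁻¹`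
turns the second factor into `Q₀⁻¹(Q₁ + τ₂(β̄β̄ᵀ)⁻¹)Q₀⁻¹`.
-/

open Matrix

/-- `β̄ = (I_m, β)`: the `m × (m+1)` matrix obtained by appending `β` as a last
column to the identity matrix `I_m`. -/
def bbar {m : ℕ} (β : Fin m → ℝ) : Matrix (Fin m) (Fin (m + 1)) ℝ :=
  Matrix.of fun i j => Fin.lastCases (β i) (fun k => (1 : Matrix (Fin m) (Fin m) ℝ) i k) j

/-- The vector `(−βᵀ, 1)ᵀ ∈ ℝ^{m+1}` with entries `−β₁, …, −β_m, 1`. -/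
def bperpVec {m : ℕ} (β : Fin m → ℝ) : Fin (m + 1) → ℝ :=
  fun j => Fin.lastCases 1 (fun k => -β k) j

open scoped Kronecker

/-- The row vector `β̄⊥ = (−βᵀ, 1)`, as a `1 × (m+1)` matrix. -/
def bperpRow {m : ℕ} (β : Fin m → ℝ) : Matrix (Fin 1) (Fin (m + 1)) ℝ :=
  Matrix.of fun _ j => Fin.lastCases 1 (fun k => -β k) j

/-- Column-major vectorization of a matrix: `vec A` is indexed by (column, row)
pairs, so that under the lexicographic identification it stacks the columns. -/
def vecCol {n q : ℕ} (A : Matrix (Fin n) (Fin q) ℝ) : Fin q × Fin n → ℝ :=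
  fun s => A s.2 s.1

/-- The commutation matrix `K_{n,q}`: the unique `nq × nq` matrix with
`K_{n,q} · vec A = vec Aᵀ` for every `n × q` real matrix `A`. -/
def commMatrix (n q : ℕ) : Matrix (Fin n × Fin q) (Fin q × Fin n) ℝ :=
  Matrix.of fun s t => if s.1 = t.2 ∧ s.2 = t.1 then 1 else 0

/-- The defining property of the commutation matrix. -/
theorem commMatrix_mulVec_vecCol {n q : ℕ} (A : Matrix (Fin n) (Fin q) ℝ) :
    commMatrix n q *ᵥ vecCol A = vecCol Aᵀ := by
  funext s
  simp only [commMatrix, vecCol, mulVec, dotProduct, Fintype.sum_prod_type, Matrix.of_apply,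
    Matrix.transpose_apply]
  rw [Finset.sum_comm]
  rw [Finset.sum_eq_single s.1 (by intro b _ hb; exact Finset.sum_eq_zero (by intro c _; simp [hb, Ne.symm]) ) (by simp)]
  rw [Finset.sum_eq_single s.2 (by intro b _ hb; simp [hb, Ne.symm]) (by simp)]
  simp

section Kronecker

variable {p q n r s : ℕ}

theorem commMatrix_mul_kronecker (A : Matrix (Fin p) (Fin n) ℝ) (B : Matrix (Fin q) (Fin r) ℝ) :
    commMatrix p q * (B ⊗ₖ A) = (A ⊗ₖ B) * commMatrix n r := by
  ext ⟨i, j⟩ ⟨k, l⟩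
  simp only [mul_apply, commMatrix, kroneckerMap_apply, of_apply, Fintype.sum_prod_type]
  rw [Finset.sum_eq_single j (fun u _ hu => Finset.sum_eq_zero fun v _ => by simp [Ne.symm hu])
    (by simp), Finset.sum_eq_single i (fun v _ hv => by simp [Ne.symm hv]) (by simp),
    Finset.sum_eq_single l (fun u _ hu => Finset.sum_eq_zero fun v _ => by simp [hu]) (by simp),
    Finset.sum_eq_single k (fun v _ hv => by simp [hv]) (by simp)]
  simp [mul_comm]

theorem kronecker_mul_one_add_commMatrix_mul_kronecker (a : Matrix (Fin p) (Fin n) ℝ)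
    (M : Matrix (Fin q) (Fin n) ℝ) (b : Matrix (Fin n) (Fin r) ℝ) (N : Matrix (Fin n) (Fin s) ℝ)
    (h : M * b = 0) :
    (a ⊗ₖ M) * (1 + commMatrix n n) * (b ⊗ₖ N) = (a * b) ⊗ₖ (M * N) := by
  rw [Matrix.mul_add, Matrix.mul_one, ← commMatrix_mul_kronecker, Matrix.add_mul,
    ← mul_kronecker_mul, Matrix.mul_assoc, ← mul_kronecker_mul, h, zero_kronecker,
    Matrix.mul_zero, add_zero]

theorem kronecker_mul_one_add_commMatrix_mul_one_kronecker (a : Matrix (Fin p) (Fin n) ℝ)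
    (M : Matrix (Fin q) (Fin n) ℝ) (C : Matrix (Fin n) (Fin n) ℝ) (h : a * C = 0) :
    (a ⊗ₖ M) * (1 + commMatrix n n) * ((1 : Matrix (Fin n) (Fin n) ℝ) ⊗ₖ C) = a ⊗ₖ (M * C) := by
  rw [Matrix.mul_add, Matrix.mul_one, ← commMatrix_mul_kronecker, Matrix.add_mul,
    ← mul_kronecker_mul, Matrix.mul_assoc, ← mul_kronecker_mul, h, kronecker_zero,
    Matrix.mul_zero, add_zero, Matrix.mul_one]

theorem kronecker_mul_symmetrizer_sandwich_mul_kronecker (τ : ℝ)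
    (a : Matrix (Fin p) (Fin n) ℝ) (M : Matrix (Fin q) (Fin n) ℝ) (C : Matrix (Fin n) (Fin n) ℝ)
    (b : Matrix (Fin n) (Fin r) ℝ) (N : Matrix (Fin n) (Fin s) ℝ)
    (hMb : M * b = 0) (haC : a * C = 0) (hCb : C * b = 0) :
    (a ⊗ₖ M) * ((2 * τ) • ((2 : ℝ)⁻¹ • (1 + commMatrix n n)) +
        (4 : ℝ) • (((2 : ℝ)⁻¹ • (1 + commMatrix n n)) * ((1 : Matrix (Fin n) (Fin n) ℝ) ⊗ₖ C) *
          ((2 : ℝ)⁻¹ • (1 + commMatrix n n)))) *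
      (b ⊗ₖ N) = (a * b) ⊗ₖ (τ • (M * N) + M * C * N) := by
  set E := 1 + commMatrix n n with hE
  have hhalf : (2 * τ) • ((2 : ℝ)⁻¹ • E) +
      (4 : ℝ) • (((2 : ℝ)⁻¹ • E) * ((1 : Matrix (Fin n) (Fin n) ℝ) ⊗ₖ C) * ((2 : ℝ)⁻¹ • E)) =
      τ • E + E * ((1 : Matrix (Fin n) (Fin n) ℝ) ⊗ₖ C) * E := by
    simp only [smul_mul_assoc, mul_smul_comm]
    module
  have hMCb : M * C * b = 0 := by rw [Matrix.mul_assoc, hCb, Matrix.mul_zero]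
  rw [hhalf, Matrix.mul_add, Matrix.add_mul, Matrix.mul_smul, Matrix.smul_mul, hE,
    kronecker_mul_one_add_commMatrix_mul_kronecker a M b N hMb, ← Matrix.mul_assoc (a ⊗ₖ M),
    ← Matrix.mul_assoc (a ⊗ₖ M), kronecker_mul_one_add_commMatrix_mul_one_kronecker a M C haC,
    kronecker_mul_one_add_commMatrix_mul_kronecker a (M * C) b N hMCb,
    kronecker_add, kronecker_smul]

end Kronecker

section Gram

variable {ι κ R : Type*} [Fintype ι] [DecidableEq ι] [Fintype κ] [CommRing R]

theorem mul_inv_gram_mul_mul_transpose (P : Matrix ι ι R) (B : Matrix ι κ R)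
    (hB : IsUnit (B * Bᵀ).det) : P * (B * Bᵀ)⁻¹ * B * Bᵀ = P := by
  rw [Matrix.mul_assoc, Matrix.mul_assoc, nonsing_inv_mul _ hB, Matrix.mul_one]

theorem mul_inv_gram_mul_mul_transpose_self (P : Matrix ι ι R) (B : Matrix ι κ R)
    (hB : IsUnit (B * Bᵀ).det) :
    P * (B * Bᵀ)⁻¹ * B * (P * (B * Bᵀ)⁻¹ * B)ᵀ = P * (B * Bᵀ)⁻¹ * Pᵀ := by
  conv_lhs => rw [transpose_mul, transpose_mul, ← Matrix.mul_assoc, ← Matrix.mul_assoc,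
    mul_inv_gram_mul_mul_transpose P B hB, transpose_nonsing_inv, transpose_mul,
    transpose_transpose]

theorem mul_inv_gram_mul_mul_sandwich_mul_transpose_self (P Q : Matrix ι ι R) (B : Matrix ι κ R)
    (hB : IsUnit (B * Bᵀ).det) :
    P * (B * Bᵀ)⁻¹ * B * (Bᵀ * Q * B) * (P * (B * Bᵀ)⁻¹ * B)ᵀ = P * Q * Pᵀ := by
  have hBM : B * (P * (B * Bᵀ)⁻¹ * B)ᵀ = Pᵀ := by
    rw [← transpose_transpose B, ← transpose_mul, transpose_transpose,
      mul_inv_gram_mul_mul_transpose P B hB]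
  simp only [← Matrix.mul_assoc]
  rw [mul_inv_gram_mul_mul_transpose P B hB, Matrix.mul_assoc _ B, hBM]

end Gram

section Bbar

variable {m : ℕ}

theorem bbar_mul_transpose_bperpRow (β : Fin m → ℝ) : bbar β * (bperpRow β)ᵀ = 0 := by
  ext i j
  simp only [mul_apply, transpose_apply, bbar, bperpRow, of_apply, Matrix.zero_apply]
  rw [Fin.sum_univ_castSucc]
  simp [Matrix.one_apply]

theorem bperpRow_mul_transpose_apply (β : Fin m → ℝ) (i j : Fin 1) :
    (bperpRow β * (bperpRow β)ᵀ) i j = 1 + β ⬝ᵥ β := by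
  simp only [mul_apply, transpose_apply, bperpRow, of_apply]
  rw [Fin.sum_univ_castSucc]
  simp [dotProduct, add_comm]

theorem bbar_mul_transpose_bbar (β : Fin m → ℝ) :
    bbar β * (bbar β)ᵀ = 1 + vecMulVec β β := by
  ext i j
  simp only [mul_apply, transpose_apply, bbar, of_apply, Matrix.add_apply, vecMulVec_apply]
  rw [Fin.sum_univ_castSucc]
  simp [Matrix.one_apply]

theorem isUnit_det_one_add_vecMulVec_self (β : Fin m → ℝ) : IsUnit (1 + vecMulVec β β).det := by
  have hβ : 0 ≤ β ⬝ᵥ β := by simpa using dotProduct_star_self_nonneg β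
  rw [vecMulVec_eq Unit, det_one_add_replicateCol_mul_replicateRow, isUnit_iff_ne_zero]
  exact (add_pos_of_pos_of_nonneg one_pos hβ).ne'

end Bbar

theorem stmt11_general {m : ℕ} (β : Fin m → ℝ)
    (Q0 Q1 : Matrix (Fin m) (Fin m) ℝ) (hQ0symm : Q0.IsSymm) (τ₂ : ℝ) :
    ∀ a b : Fin 1 × Fin m,
      ((bperpRow β ⊗ₖ (Q0⁻¹ * (bbar β * (bbar β)ᵀ)⁻¹ * bbar β)) *
          ((2 * τ₂) •
              ((2 : ℝ)⁻¹ • ((1 : Matrix ((Fin (m + 1)) × (Fin (m + 1)))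
                  ((Fin (m + 1)) × (Fin (m + 1))) ℝ) + commMatrix (m + 1) (m + 1))) +
            (4 : ℝ) •
              (((2 : ℝ)⁻¹ • ((1 : Matrix ((Fin (m + 1)) × (Fin (m + 1)))
                    ((Fin (m + 1)) × (Fin (m + 1))) ℝ) + commMatrix (m + 1) (m + 1))) *
                ((1 : Matrix (Fin (m + 1)) (Fin (m + 1)) ℝ) ⊗ₖ ((bbar β)ᵀ * Q1 * bbar β)) *
                ((2 : ℝ)⁻¹ • ((1 : Matrix ((Fin (m + 1)) × (Fin (m + 1)))
                    ((Fin (m + 1)) × (Fin (m + 1))) ℝ) + commMatrix (m + 1) (m + 1))))) *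
          ((bperpRow β)ᵀ ⊗ₖ (Q0⁻¹ * (bbar β * (bbar β)ᵀ)⁻¹ * bbar β)ᵀ)) a b =
        ((1 + β ⬝ᵥ β) •
            (Q0⁻¹ * (Q1 + τ₂ • (1 + Matrix.vecMulVec β β)⁻¹) * Q0⁻¹)) a.2 b.2 := by
  intro a b
  have hB : IsUnit (bbar β * (bbar β)ᵀ).det :=
    bbar_mul_transpose_bbar β ▸ isUnit_det_one_add_vecMulVec_self β
  have hP : (Q0⁻¹)ᵀ = Q0⁻¹ := by rw [transpose_nonsing_inv, hQ0symm.eq]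
  have hbB : bperpRow β * (bbar β)ᵀ = 0 := by
    simpa using congrArg transpose (bbar_mul_transpose_bperpRow β)
  have hMb : Q0⁻¹ * (bbar β * (bbar β)ᵀ)⁻¹ * bbar β * (bperpRow β)ᵀ = 0 := by
    rw [Matrix.mul_assoc, bbar_mul_transpose_bperpRow, Matrix.mul_zero]
  have hbC : bperpRow β * ((bbar β)ᵀ * Q1 * bbar β) = 0 := by
    rw [← Matrix.mul_assoc, ← Matrix.mul_assoc, hbB, Matrix.zero_mul, Matrix.zero_mul]
  have hCb : (bbar β)ᵀ * Q1 * bbar β * (bperpRow β)ᵀ = 0 := by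
    rw [Matrix.mul_assoc, bbar_mul_transpose_bperpRow, Matrix.mul_zero]
  rw [kronecker_mul_symmetrizer_sandwich_mul_kronecker τ₂ _ _ _ _ _ hMb hbC hCb,
    mul_inv_gram_mul_mul_transpose_self _ _ hB,
    mul_inv_gram_mul_mul_sandwich_mul_transpose_self _ _ _ hB, hP, bbar_mul_transpose_bbar,
    kroneckerMap_apply, bperpRow_mul_transpose_apply, Matrix.smul_apply, smul_eq_mul,
    Matrix.mul_add, Matrix.add_mul, mul_smul_comm, smul_mul_assoc, add_comm (Q0⁻¹ * Q1 * Q0⁻¹)]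

/-- Asymptotic variance identity for the unprewhitened estimator: with
`M = Q₀⁻¹(β̄β̄ᵀ)⁻¹β̄` and `N_{m+1} = (I_{(m+1)²} + K_{m+1,m+1})/2`,
`[β̄⊥ ⊗ M]·{2τ₂N_{m+1} + 4N_{m+1}(I_{m+1} ⊗ (β̄ᵀQ₁β̄))N_{m+1}}·[(β̄⊥)ᵀ ⊗ Mᵀ]
  = (1 + βᵀβ)·Q₀⁻¹{Q₁ + τ₂(I_m + ββᵀ)⁻¹}Q₀⁻¹`. -/
theorem stmt11 {m : ℕ} (hm : 0 < m) (β : Fin m → ℝ)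
    (Q0 Q1 : Matrix (Fin m) (Fin m) ℝ) (hQ0symm : Q0.IsSymm) (hQ1symm : Q1.IsSymm)
    (hQ0 : IsUnit Q0.det) (τ₂ : ℝ) :
    ∀ a b : Fin 1 × Fin m,
      ((bperpRow β ⊗ₖ (Q0⁻¹ * (bbar β * (bbar β)ᵀ)⁻¹ * bbar β)) *
          ((2 * τ₂) •
              ((2 : ℝ)⁻¹ • ((1 : Matrix ((Fin (m + 1)) × (Fin (m + 1)))
                  ((Fin (m + 1)) × (Fin (m + 1))) ℝ) + commMatrix (m + 1) (m + 1))) +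
            (4 : ℝ) •
              (((2 : ℝ)⁻¹ • ((1 : Matrix ((Fin (m + 1)) × (Fin (m + 1)))
                    ((Fin (m + 1)) × (Fin (m + 1))) ℝ) + commMatrix (m + 1) (m + 1))) *
                ((1 : Matrix (Fin (m + 1)) (Fin (m + 1)) ℝ) ⊗ₖ ((bbar β)ᵀ * Q1 * bbar β)) *
                ((2 : ℝ)⁻¹ • ((1 : Matrix ((Fin (m + 1)) × (Fin (m + 1)))
                    ((Fin (m + 1)) × (Fin (m + 1))) ℝ) + commMatrix (m + 1) (m + 1))))) *
          ((bperpRow β)ᵀ ⊗ₖ (Q0⁻¹ * (bbar β * (bbar β)ᵀ)⁻¹ * bbar β)ᵀ)) a b =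
        ((1 + β ⬝ᵥ β) •
            (Q0⁻¹ * (Q1 + τ₂ • (1 + Matrix.vecMulVec β β)⁻¹) * Q0⁻¹)) a.2 b.2 :=
  stmt11_general β Q0 Q1 hQ0symm τ₂
end

section
/- (The unprewhitened estimator can be asymptotically more efficient than the prewhitened one.) Let p be a positive integer, β₁ ∈ ℝ, σ_max² > 0, and for i = 1,…,p let 0 < σ_i² < σ_max². Define c_i = σ_i²/{(1+β₁²)(σ_max² − σ_i²)} > 0. Then (∑_{i=1}^p {1 + (1+β₁²)c_i})/(∑_{i=1}^p c_i)² ≥ 1/(∑_{i=1}^p c_i²/{1 + (1+β₁²)c_i}), with equality if and only if σ_1² = σ_2² = ⋯ = σ_p². -/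
/-!
Writing `a_i = 1 + (1+β₁²)c_i`, the inequality is Sedrakyan's form of Cauchy–Schwarz,
`(∑ c_i)² ≤ (∑ a_i)(∑ c_i²/a_i)`. The Lagrange identity
`2((∑ a)(∑ c²/a) − (∑ c)²) = ∑_{i,j} (c_i a_j − c_j a_i)²/(a_i a_j)` shows that equality holds
iff `c_i a_j = c_j a_i` for all `i, j`, i.e. iff all `c_i` agree; and `c_i` is an injective
function of `σ_i² ∈ (0, σ_max²)`.
-/

/-- In the setting of Example 2 of the paper (`x_i² = σ_i⁴/{(1+β₁²)(σ_max² − σ_i²)}`),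
`c_i = x_i²/σ_i² = σ_i²/{(1+β₁²)(σ_max² − σ_i²)}`, where `σ2 i` denotes `σ_i²`. -/
noncomputable def cEx {p : ℕ} (β₁ σmax2 : ℝ) (σ2 : Fin p → ℝ) (i : Fin p) : ℝ :=
  σ2 i / ((1 + β₁ ^ 2) * (σmax2 - σ2 i))

open Finset

namespace Finset

variable {ι : Type*} (s : Finset ι) (c : ι → ℝ) {a : ι → ℝ}

theorem two_mul_sum_mul_sum_sq_div_sub_sq_sum (ha : ∀ i ∈ s, a i ≠ 0) :
    2 * ((∑ i ∈ s, a i) * (∑ i ∈ s, c i ^ 2 / a i) - (∑ i ∈ s, c i) ^ 2) =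
      ∑ i ∈ s, ∑ j ∈ s, (c i * a j - c j * a i) ^ 2 / (a i * a j) := by
  have hterm : ∀ i ∈ s, ∀ j ∈ s, (c i * a j - c j * a i) ^ 2 / (a i * a j) =
      c i ^ 2 / a i * a j + a i * (c j ^ 2 / a j) - 2 * c i * c j := by
    intro i hi j hj
    field_simp [ha i hi, ha j hj]
    ring
  rw [sum_congr rfl fun i hi => sum_congr rfl fun j hj => hterm i hi j hj]
  simp only [sum_sub_distrib, sum_add_distrib, ← mul_sum, ← sum_mul]
  ring

variable {s c}

theorem sq_sum_le_sum_mul_sum_sq_div (ha : ∀ i ∈ s, 0 < a i) :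
    (∑ i ∈ s, c i) ^ 2 ≤ (∑ i ∈ s, a i) * ∑ i ∈ s, c i ^ 2 / a i := by
  have hid := two_mul_sum_mul_sum_sq_div_sub_sq_sum s c fun i hi => (ha i hi).ne'
  have hnonneg : 0 ≤ ∑ i ∈ s, ∑ j ∈ s, (c i * a j - c j * a i) ^ 2 / (a i * a j) :=
    sum_nonneg fun i hi => sum_nonneg fun j hj =>
      div_nonneg (sq_nonneg _) (mul_pos (ha i hi) (ha j hj)).le
  linarith

theorem sq_sum_eq_sum_mul_sum_sq_div_iff (ha : ∀ i ∈ s, 0 < a i) :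
    (∑ i ∈ s, c i) ^ 2 = (∑ i ∈ s, a i) * ∑ i ∈ s, c i ^ 2 / a i ↔
      ∀ i ∈ s, ∀ j ∈ s, c i * a j = c j * a i := by
  have hterm_nonneg : ∀ i ∈ s, ∀ j ∈ s, 0 ≤ (c i * a j - c j * a i) ^ 2 / (a i * a j) :=
    fun i hi j hj => div_nonneg (sq_nonneg _) (mul_pos (ha i hi) (ha j hj)).le
  have hinner_nonneg : ∀ i ∈ s, 0 ≤ ∑ j ∈ s, (c i * a j - c j * a i) ^ 2 / (a i * a j) :=
    fun i hi => sum_nonneg (hterm_nonneg i hi)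
  have hid := two_mul_sum_mul_sum_sq_div_sub_sq_sum s c fun i hi => (ha i hi).ne'
  rw [eq_comm, ← sub_eq_zero, ← mul_eq_zero_iff_left (two_ne_zero (α := ℝ)), hid,
    sum_eq_zero_iff_of_nonneg hinner_nonneg]
  refine forall₂_congr fun i hi => ?_
  rw [sum_eq_zero_iff_of_nonneg (hterm_nonneg i hi)]
  refine forall₂_congr fun j hj => ?_
  rw [div_eq_zero_iff, or_iff_left (mul_pos (ha i hi) (ha j hj)).ne', sq_eq_zero_iff, sub_eq_zero]

end Finset

section Example

variable {p : ℕ} {β₁ σmax2 : ℝ} {σ2 : Fin p → ℝ}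

theorem cEx_pos {i : Fin p} (hpos : 0 < σ2 i) (hlt : σ2 i < σmax2) : 0 < cEx β₁ σmax2 σ2 i :=
  div_pos hpos (mul_pos (by positivity) (sub_pos.mpr hlt))

theorem cEx_eq_cEx_iff {i j : Fin p} (hipos : 0 < σ2 i) (hilt : σ2 i < σmax2)
    (hjlt : σ2 j < σmax2) : cEx β₁ σmax2 σ2 i = cEx β₁ σmax2 σ2 j ↔ σ2 i = σ2 j := by
  refine ⟨fun h => ?_, fun h => by rw [cEx, cEx, h]⟩
  have hk : (0 : ℝ) < 1 + β₁ ^ 2 := by positivity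
  rw [cEx, cEx, div_eq_div_iff (mul_pos hk (sub_pos.mpr hilt)).ne'
    (mul_pos hk (sub_pos.mpr hjlt)).ne'] at h
  have hM : σmax2 * (1 + β₁ ^ 2) ≠ 0 := (mul_pos (hipos.trans hilt) hk).ne'
  exact mul_left_cancel₀ hM (by linear_combination h)

end Example

theorem mul_one_add_mul_eq_mul_one_add_mul_iff {x y k : ℝ} :
    x * (1 + k * y) = y * (1 + k * x) ↔ x = y :=
  ⟨fun h => by linear_combination h, fun h => by rw [h]⟩

theorem stmt15_general {p : ℕ} (β₁ σmax2 : ℝ)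
    (σ2 : Fin p → ℝ) (hσpos : ∀ i, 0 < σ2 i) (hσlt : ∀ i, σ2 i < σmax2) :
    (∑ i, (1 + (1 + β₁ ^ 2) * cEx β₁ σmax2 σ2 i)) / (∑ i, cEx β₁ σmax2 σ2 i) ^ 2 ≥
        1 / (∑ i, (cEx β₁ σmax2 σ2 i) ^ 2 / (1 + (1 + β₁ ^ 2) * cEx β₁ σmax2 σ2 i)) ∧
      ((∑ i, (1 + (1 + β₁ ^ 2) * cEx β₁ σmax2 σ2 i)) / (∑ i, cEx β₁ σmax2 σ2 i) ^ 2 =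
          1 / (∑ i, (cEx β₁ σmax2 σ2 i) ^ 2 / (1 + (1 + β₁ ^ 2) * cEx β₁ σmax2 σ2 i)) ↔
        ∀ i j, σ2 i = σ2 j) := by
  rcases p.eq_zero_or_pos with rfl | hp
  · simp
  have hne : (univ : Finset (Fin p)).Nonempty := univ_nonempty_iff.mpr (Fin.pos_iff_nonempty.mp hp)
  have hc : ∀ i, 0 < cEx β₁ σmax2 σ2 i := fun i => cEx_pos (hσpos i) (hσlt i)
  have ha : ∀ i ∈ univ, 0 < 1 + (1 + β₁ ^ 2) * cEx β₁ σmax2 σ2 i := fun i _ => by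
    have := hc i; positivity
  have hU2 : 0 < (∑ i, cEx β₁ σmax2 σ2 i) ^ 2 := pow_pos (sum_pos (fun i _ => hc i) hne) 2
  have hT : 0 < ∑ i, cEx β₁ σmax2 σ2 i ^ 2 / (1 + (1 + β₁ ^ 2) * cEx β₁ σmax2 σ2 i) :=
    sum_pos (fun i hi => div_pos (pow_pos (hc i) 2) (ha i hi)) hne
  rw [ge_iff_le, div_le_div_iff₀ hT hU2, div_eq_div_iff hU2.ne' hT.ne', one_mul, eq_comm]
  refine ⟨sq_sum_le_sum_mul_sum_sq_div ha, ?_⟩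
  rw [sq_sum_eq_sum_mul_sum_sq_div_iff ha]
  simp only [mem_univ, forall_const, mul_one_add_mul_eq_mul_one_add_mul_iff]
  exact forall₂_congr fun i j => cEx_eq_cEx_iff (hσpos i) (hσlt i) (hσlt j)

/-- The unprewhitened estimator can be asymptotically more efficient than the
prewhitened one: `AMSE(β̂(Σ⁻¹)) = (∑{1+(1+β₁²)c_i})/(∑c_i)²
  ≥ 1/(∑ c_i²/{1+(1+β₁²)c_i}) = AMSE(β̂(I_p))`,
with equality iff `σ_1² = ⋯ = σ_p²`. -/
theorem stmt15 {p : ℕ} (hp : 0 < p) (β₁ σmax2 : ℝ) (hσmax : 0 < σmax2)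
    (σ2 : Fin p → ℝ) (hσpos : ∀ i, 0 < σ2 i) (hσlt : ∀ i, σ2 i < σmax2) :
    (∑ i, (1 + (1 + β₁ ^ 2) * cEx β₁ σmax2 σ2 i)) / (∑ i, cEx β₁ σmax2 σ2 i) ^ 2 ≥
        1 / (∑ i, (cEx β₁ σmax2 σ2 i) ^ 2 / (1 + (1 + β₁ ^ 2) * cEx β₁ σmax2 σ2 i)) ∧
      ((∑ i, (1 + (1 + β₁ ^ 2) * cEx β₁ σmax2 σ2 i)) / (∑ i, cEx β₁ σmax2 σ2 i) ^ 2 =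
          1 / (∑ i, (cEx β₁ σmax2 σ2 i) ^ 2 / (1 + (1 + β₁ ^ 2) * cEx β₁ σmax2 σ2 i)) ↔
        ∀ i j, σ2 i = σ2 j) :=
  stmt15_general β₁ σmax2 σ2 hσpos hσlt
end
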